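/- arXiv:2210.14039 — 3 statements merged into one kernel-verified Lean document; each statement's English description precedes it below -/
import Mathlib

section
/- Let G be a group and A a non-empty subset of G. Then A is 2-stable (i.e., there exist no elements a1, b1, a2, b2 in G such that a_i^{-1}·b_j ∈ A if and only if i ≤ j) if and only if A is a left coset of a subgroup of G. -/
/-- A non-empty subset `A` of a group `G` is 2-stable (no half-graph of
height 2: no `a b : Fin 2 → G` with `(a i)⁻¹ * b j ∈ A ↔ i ≤ j`) if and
only if `A` is a left coset of a subgroup of `G`. -/
theorem stmt0 {G : Type*} [Group G] (A : Set G) (hA : A.Nonempty) :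
    (¬ ∃ a b : Fin 2 → G, ∀ i j : Fin 2, (a i)⁻¹ * b j ∈ A ↔ i ≤ j) ↔
      ∃ (H : Subgroup G) (g : G), A = (fun h => g * h) '' (H : Set G) := by
  obtain ⟨c, hc⟩ := hA
  constructor
  · intro hstable
    have key : ∀ x ∈ A, ∀ y ∈ A, ∀ z ∈ A, x * y⁻¹ * z ∈ A := by
      intro x hx y hy z hz
      by_contra hxyz
      apply hstable
      refine ⟨![x * y⁻¹, 1], ![x * y⁻¹ * z, x], ?_⟩
      intro i j
      fin_cases i <;> fin_cases j <;>
        simp only [Matrix.cons_val_zero, Matrix.cons_val_one, Matrix.head_cons] <;>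
        constructor <;> intro h
      · exact Fin.le_refl _
      · simpa [mul_assoc] using hz
      · exact Fin.zero_le _
      · simpa [mul_assoc] using hy
      · exact absurd (by simpa using h) hxyz
      · exact absurd h (by decide)
      · exact le_refl _
      · simpa using hx
    refine ⟨{ carrier := {h | c * h ∈ A},
              one_mem' := by simpa using hc,
              mul_mem' := ?_,
              inv_mem' := ?_ }, c, ?_⟩
    · intro h1 h2 m1 m2
      have := key (c * h1) m1 c hc (c * h2) m2
      simpa [mul_assoc] using this
    · intro h m
      have := key c hc (c * h) m c hc
      simpa [mul_assoc] using this
    · ext x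
      constructor
      · intro hx
        exact ⟨c⁻¹ * x, by simpa using hx, by simp⟩
      · rintro ⟨y, hy, rfl⟩
        exact hy
  · rintro ⟨H, g, rfl⟩ ⟨a, b, hab⟩
    obtain ⟨u, hu, hu'⟩ := (hab 0 0).2 (le_refl _)
    obtain ⟨v, hv, hv'⟩ := (hab 0 1).2 (by decide)
    obtain ⟨w, hw, hw'⟩ := (hab 1 1).2 (le_refl _)
    have : (a 1)⁻¹ * b 0 ∈ (fun h => g * h) '' (H : Set G) := by
      refine ⟨w * v⁻¹ * u, mul_mem (mul_mem hw (inv_mem hv)) hu, ?_⟩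
      simp only at hu' hv' hw'
      have h1 : b 0 = a 0 * (g * u) := by rw [hu']; group
      have h2 : b 1 = a 0 * (g * v) := by rw [hv']; group
      have h3 : b 1 = a 1 * (g * w) := by rw [hw']; group
      have h4 : a 1 = a 0 * (g * v) * (g * w)⁻¹ := by
        rw [← h2, h3]; group
      rw [h1, h4]; group
    exact absurd ((hab 1 0).1 this) (by decide)
end

section
/- Let G be an abelian group (written additively) and A ⊆ G a Sidon set, i.e., whenever a + b = c + d with a, b, c, d ∈ A, we have {a, b} = {c, d}. Then A is 3-stable: there is no sequence (a_1, b_1, a_2, b_2, a_3, b_3) in G^6 with b_j - a_i ∈ A if and only if i ≤ j. -/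
/-- A Sidon subset of an abelian group is 3-stable. -/
theorem stmt1 {G : Type*} [AddCommGroup G] (A : Set G)
    (hSidon : ∀ a ∈ A, ∀ b ∈ A, ∀ c ∈ A, ∀ d ∈ A,
      a + b = c + d → (a = c ∧ b = d) ∨ (a = d ∧ b = c)) :
    ¬ ∃ a b : Fin 3 → G, ∀ i j : Fin 3, b j - a i ∈ A ↔ i ≤ j := by
  rintro ⟨a, b, h⟩
  have h12 : b 1 - a 0 ∈ A := (h 0 1).2 (by decide)
  have h13 : b 2 - a 0 ∈ A := (h 0 2).2 (by decide)
  have h23 : b 2 - a 1 ∈ A := (h 1 2).2 (by decide)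
  have h22 : b 1 - a 1 ∈ A := (h 1 1).2 le_rfl
  have key : (b 1 - a 0) + (b 2 - a 1) = (b 2 - a 0) + (b 1 - a 1) := by abel
  rcases hSidon _ h12 _ h23 _ h13 _ h22 key with ⟨h1, _⟩ | ⟨h1, _⟩
  · have hb : b 1 = b 2 := sub_left_inj.mp h1
    have hm : b 1 - a 2 ∈ A := hb ▸ (h 2 2).2 le_rfl
    exact absurd ((h 2 1).1 hm) (by decide)
  · have ha : a 0 = a 1 := sub_right_inj.mp h1
    have hm : b 0 - a 1 ∈ A := ha ▸ (h 0 0).2 le_rfl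
    exact absurd ((h 1 0).1 hm) (by decide)
end

section
/- Let X, Y be finite sets and S ⊆ X × Y a relation that is a finite union of ℓ boxes, S = ⋃_{i=1}^{ℓ} X_i × Y_i with X_i ⊆ X, Y_i ⊆ Y. Then S is (2^ℓ + 1)-stable: S induces no half-graph of height 2^ℓ + 1. -/
/-- A finite union of `ℓ` boxes is `(2^ℓ + 1)`-stable. -/
theorem stmt18 {X Y : Type*} [Finite X] [Finite Y] (ℓ : ℕ)
    (Xs : Fin ℓ → Set X) (Ys : Fin ℓ → Set Y) (S : Set (X × Y))
    (hS : S = ⋃ i : Fin ℓ, Xs i ×ˢ Ys i) :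
    ¬ ∃ a : Fin (2 ^ ℓ + 1) → X, ∃ b : Fin (2 ^ ℓ + 1) → Y,
      ∀ i j : Fin (2 ^ ℓ + 1), (a i, b j) ∈ S ↔ i ≤ j := by
  rintro ⟨a, b, h⟩
  -- record, for each index i, the set of boxes containing (a i, b i)
  set f : Fin (2 ^ ℓ + 1) → Set (Fin ℓ) := fun i => {t | a i ∈ Xs t ∧ b i ∈ Ys t} with hf
  have hcard : Fintype.card (Set (Fin ℓ)) < Fintype.card (Fin (2 ^ ℓ + 1)) := by
    simp
  obtain ⟨i, j, hne, heq⟩ := Fintype.exists_ne_map_eq_of_card_lt f hcard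
  wlog hij : i < j generalizing i j
  · exact this j i hne.symm heq.symm (hne.lt_or_gt.resolve_left hij)
  -- (a i, b i) ∈ S, so some box t contains it
  have hii : (a i, b i) ∈ S := (h i i).2 le_rfl
  rw [hS] at hii
  obtain ⟨t, ⟨hx, hy⟩⟩ := Set.mem_iUnion.1 hii
  have hti : t ∈ f i := ⟨hx, hy⟩
  have htj : t ∈ f j := heq ▸ hti
  -- then (a j, b i) ∈ box t ⊆ S, contradicting i < j
  have : (a j, b i) ∈ S := by
    rw [hS]
    exact Set.mem_iUnion.2 ⟨t, htj.1, hti.2⟩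
  exact absurd ((h j i).1 this) (not_le.2 hij)
end
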